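/- For any connected graph G and any graph H, the mobile general position number of the corona product satisfies max{mob(G), mob(H ∨ K_1)} ≤ mob(G ⊙ H) ≤ max{n(G), gp(H ∨ K_1)}, where n(G) is the order of G. -/

import Mathlib

open SimpleGraph

/-- `S` is a general position set of `G`: for all `u, v ∈ S`, every shortest `u,v`-path
contains no vertex of `S` other than `u` and `v`. -/
def IsGPSet {V : Type*} (G : SimpleGraph V) (S : Set V) : Prop :=
  ∀ u ∈ S, ∀ v ∈ S, ∀ p : G.Walk u v, p.IsPath → p.length = G.dist u v →
    ∀ w ∈ p.support, w ∈ S → w = u ∨ w = v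

/-- A legal move from the configuration `S` to the configuration `T`: a robot at `u ∈ S`
moves to an adjacent unoccupied vertex `v ∉ S` so that the resulting configuration
`(S \ {u}) ∪ {v}` is again a general position set. -/
def LegalMove {V : Type*} (G : SimpleGraph V) (S T : Set V) : Prop :=
  IsGPSet G S ∧ ∃ u ∈ S, ∃ v, v ∉ S ∧ G.Adj u v ∧
    T = insert v (S \ {u}) ∧ IsGPSet G T

/-- `S` is a mobile general position set: there is a finite sequence of configurations
`S = S_0, S_1, …, S_k`, each obtained from the previous one by a legal move, whose union
is the whole vertex set. -/
def IsMobileGPSet {V : Type*} (G : SimpleGraph V) (S : Set V) : Prop :=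
  IsGPSet G S ∧ ∃ (k : ℕ) (f : ℕ → Set V), f 0 = S ∧
    (∀ i < k, LegalMove G (f i) (f (i + 1))) ∧
    (⋃ i ∈ Set.Iic k, f i) = Set.univ

/-- The mobile general position number of `G`: the maximum cardinality of a mobile
general position set. -/
noncomputable def mob {V : Type*} (G : SimpleGraph V) : ℕ :=
  sSup {n | ∃ S : Set V, IsMobileGPSet G S ∧ S.ncard = n}

/-- The general position number of `G`: the maximum cardinality of a general position set. -/
noncomputable def gp {V : Type*} (G : SimpleGraph V) : ℕ :=
  sSup {n | ∃ S : Set V, IsGPSet G S ∧ S.ncard = n}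

/-- The join `G ∨ H` of two graphs: the disjoint union of `G` and `H` together with all
edges between `V(G)` and `V(H)`. -/
def joinGraph {α β : Type*} (G : SimpleGraph α) (H : SimpleGraph β) : SimpleGraph (α ⊕ β) :=
  SimpleGraph.fromRel (fun x y =>
    (∃ a b, x = Sum.inl a ∧ y = Sum.inl b ∧ G.Adj a b) ∨
    (∃ a b, x = Sum.inr a ∧ y = Sum.inr b ∧ H.Adj a b) ∨
    (x.isLeft ∧ y.isRight))

/-- The corona product `G ⊙ H`: one copy of `G` and, for each vertex `i` of `G`, one copy
of `H` (on vertices `{i} × V(H)`) with all edges between `i` and that copy. -/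
def corona {α β : Type*} (G : SimpleGraph α) (H : SimpleGraph β) : SimpleGraph (α ⊕ α × β) :=
  SimpleGraph.fromRel (fun x y =>
    (∃ u v, x = Sum.inl u ∧ y = Sum.inl v ∧ G.Adj u v) ∨
    (∃ i a b, x = Sum.inr (i, a) ∧ y = Sum.inr (i, b) ∧ H.Adj a b) ∨
    (∃ i a, x = Sum.inl i ∧ y = Sum.inr (i, a)))

/-!
A general position set of the corona is a set in which no vertex lies metrically between two
others. Distances between different units `{i} ∪ H^i` are `G`-distances plus one for each end
in a copy of `H`, while a unit is an isometric copy of the cone `H ∨ K₁`.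

Lower bounds: a mobile set of `G` stays mobile in `G ⊙ H`, since a robot standing on `i` can
step into `H^i` and back. A mobile set of the cone, placed in one unit, stays mobile: once a
robot reaches the apex `i`, all other robots are in `H^i`, every vertex outside the unit is
equidistant from them, and so that robot can tour `G` and step into every other copy.

Upper bound: with more than `max (n(G), gp(H ∨ K₁))` robots, two share a unit. A robot at the
apex `i` together with one in `H^i` is impossible, because some robot lies outside the unit and
`i` lies on its shortest paths into `H^i`. So both robots are in `H^i`; they can leave only
through `i`, so two robots stay in `H^i` forever and `i` is never visited.
-/

section Metric

variable {V : Type*} {Γ : SimpleGraph V}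

lemma SimpleGraph.Walk.dist_add_dist_le_length {x y w : V} (p : Γ.Walk x y)
    (hw : w ∈ p.support) : Γ.dist x w + Γ.dist w y ≤ p.length := by
  classical
  rw [← p.take_spec hw, Walk.length_append]
  exact Nat.add_le_add (Γ.dist_le _) (Γ.dist_le _)

lemma SimpleGraph.Walk.le_add_length {f : V → ℕ} (hf : ∀ a b, Γ.Adj a b → f b ≤ f a + 1)
    {x y : V} (p : Γ.Walk x y) : f y ≤ f x + p.length := by
  induction p with
  | nil => simp
  | cons h _ ih => have := hf _ _ h; simp only [Walk.length_cons]; omega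

lemma SimpleGraph.Reachable.le_add_dist {f : V → ℕ} (hf : ∀ a b, Γ.Adj a b → f b ≤ f a + 1)
    {x y : V} (h : Γ.Reachable x y) : f y ≤ f x + Γ.dist x y := by
  obtain ⟨p, hp⟩ := h.exists_walk_length_eq_dist
  exact hp ▸ p.le_add_length hf

lemma SimpleGraph.Embedding.dist_eq_of_dist_le_two {W : Type*} {Δ : SimpleGraph W}
    (φ : Γ ↪g Δ) {u v : V} (hr : Γ.Reachable u v) (h2 : Γ.dist u v ≤ 2) :
    Δ.dist (φ u) (φ v) = Γ.dist u v := by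
  obtain ⟨p, hp⟩ := hr.exists_walk_length_eq_dist
  have hle : Δ.dist (φ u) (φ v) ≤ Γ.dist u v := hp ▸ p.length_map φ.toHom ▸ Δ.dist_le _
  have hr' : Δ.Reachable (φ u) (φ v) := ⟨p.map φ.toHom⟩
  by_cases huv : u = v
  · simp [huv]
  by_cases hadj : Γ.Adj u v
  · rw [dist_eq_one_iff_adj.mpr hadj, dist_eq_one_iff_adj.mpr (φ.map_adj_iff.mpr hadj)]
  have h1 := hr.one_lt_dist_of_ne_of_not_adj huv hadj
  have h1' := hr'.one_lt_dist_of_ne_of_not_adj (φ.injective.ne huv) (mt φ.map_adj_iff.mp hadj)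
  omega

end Metric

section GeneralPosition

variable {V : Type*} {Γ : SimpleGraph V}

theorem isGPSet_iff_dist (hΓ : Γ.Connected) {S : Set V} :
    IsGPSet Γ S ↔ ∀ u ∈ S, ∀ v ∈ S, ∀ w ∈ S,
      Γ.dist u w + Γ.dist w v = Γ.dist u v → w = u ∨ w = v := by
  constructor
  · intro hS u hu v hv w hw huwv
    obtain ⟨p, hp⟩ := hΓ.exists_walk_length_eq_dist u w
    obtain ⟨q, hq⟩ := hΓ.exists_walk_length_eq_dist w v
    have hlen : (p.append q).length = Γ.dist u v := by rw [Walk.length_append, hp, hq, huwv]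
    exact hS u hu v hv _ ((p.append q).isPath_of_length_eq_dist hlen) hlen w
      (Walk.mem_support_append_iff p q |>.mpr (Or.inl p.end_mem_support)) hw
  · intro hS u hu v hv p _ hp w hwp hw
    refine hS u hu v hv w hw (le_antisymm ?_ hΓ.dist_triangle)
    exact hp ▸ p.dist_add_dist_le_length hwp

lemma IsGPSet.subset {S T : Set V} (hS : IsGPSet Γ S) (hTS : T ⊆ S) : IsGPSet Γ T :=
  fun u hu v hv p hp hl w hw hwT => hS u (hTS hu) v (hTS hv) p hp hl w hw (hTS hwT)

lemma IsGPSet.image_of_dist_eq {W : Type*} {Δ : SimpleGraph W} (hΓ : Γ.Connected)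
    (hΔ : Δ.Connected) {φ : V → W} (hφ : ∀ u v, Δ.dist (φ u) (φ v) = Γ.dist u v) {S : Set V}
    (hS : IsGPSet Γ S) : IsGPSet Δ (φ '' S) := by
  rw [isGPSet_iff_dist hΓ] at hS
  rw [isGPSet_iff_dist hΔ]
  rintro _ ⟨u, hu, rfl⟩ _ ⟨v, hv, rfl⟩ _ ⟨w, hw, rfl⟩ h
  simp only [hφ] at h
  rcases hS u hu v hv w hw h with rfl | rfl <;> simp

lemma IsGPSet.preimage_of_dist_eq {W : Type*} {Δ : SimpleGraph W} (hΓ : Γ.Connected)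
    (hΔ : Δ.Connected) {φ : V → W} (hinj : φ.Injective)
    (hφ : ∀ u v, Δ.dist (φ u) (φ v) = Γ.dist u v) {S : Set W}
    (hS : IsGPSet Δ S) : IsGPSet Γ (φ ⁻¹' S) := by
  rw [isGPSet_iff_dist hΔ] at hS
  rw [isGPSet_iff_dist hΓ]
  intro u hu v hv w hw h
  rw [← hφ, ← hφ, ← hφ] at h
  exact (hS _ hu _ hv _ hw h).imp (@hinj _ _) (@hinj _ _)

lemma IsGPSet.insert_of_dist_eq (hΓ : Γ.Connected) {E : Set V} (hE : IsGPSet Γ E) {x : V}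
    {D : ℕ} (hD : ∀ e ∈ E, Γ.dist x e = D) (hdiam : ∀ e ∈ E, ∀ e' ∈ E, Γ.dist e e' < 2 * D) :
    IsGPSet Γ (insert x E) := by
  rw [isGPSet_iff_dist hΓ] at hE ⊢
  have hD' : ∀ e ∈ E, Γ.dist e x = D := fun e he => Γ.dist_comm ▸ hD e he
  rintro u (rfl | hu) v (rfl | hv) w (rfl | hw) h
  all_goals first
    | exact Or.inl rfl
    | exact Or.inr rfl
    | skip
  · simp only [SimpleGraph.dist_self, hD w hw, hD' w hw] at h
    exact absurd (hdiam w hw w hw) (by simp; omega)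
  · rw [hD w hw, hD v hv] at h
    exact Or.inr ((hΓ.dist_eq_zero_iff).mp (by omega))
  · rw [hD' w hw, hD' u hu] at h
    exact Or.inl ((hΓ.dist_eq_zero_iff).mp (by omega)).symm
  · rw [hD' u hu, hD v hv] at h
    exact absurd (hdiam u hu v hv) (by omega)
  · exact hE u hu v hv w hw h

lemma le_gp [Finite V] {S : Set V} (hS : IsGPSet Γ S) : S.ncard ≤ gp Γ :=
  le_csSup ⟨Nat.card V, by rintro _ ⟨T, -, rfl⟩; exact Set.ncard_le_card T⟩ ⟨S, hS, rfl⟩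

end GeneralPosition

section Mobility

variable {V : Type*} {Γ : SimpleGraph V}

lemma LegalMove.symm {S T : Set V} (h : LegalMove Γ S T) : LegalMove Γ T S := by
  obtain ⟨hS, u, hu, v, hv, huv, rfl, hT⟩ := h
  refine ⟨hT, v, Set.mem_insert v _, u, fun h => ?_, huv.symm, ?_, hS⟩
  · rcases h with h | h
    exacts [huv.ne h, h.2 rfl]
  · rw [Set.insert_sdiff_self_of_notMem (fun h => hv h.1), Set.insert_sdiff_singleton,
      Set.insert_eq_of_mem hu]

lemma LegalMove.ncard_eq [Finite V] {S T : Set V} (h : LegalMove Γ S T) : T.ncard = S.ncard := by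
  obtain ⟨-, u, hu, v, hv, -, rfl, -⟩ := h
  rw [Set.ncard_insert_of_notMem (fun h => hv h.1), Set.ncard_sdiff_singleton_add_one hu]

lemma LegalMove.isGPSet_right {S T : Set V} (h : LegalMove Γ S T) : IsGPSet Γ T := by
  obtain ⟨-, -, -, -, -, -, -, hT⟩ := h
  exact hT

lemma IsGPSet.of_reflTransGen {S T : Set V} (hS : IsGPSet Γ S)
    (h : Relation.ReflTransGen (LegalMove Γ) S T) : IsGPSet Γ T := by
  cases h.cases_tail with
  | inl h => exact h ▸ hS
  | inr h => obtain ⟨_, -, m⟩ := h; exact m.isGPSet_right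

lemma legalMove_insert {E : Set V} {x y : V} (hx : IsGPSet Γ (insert x E))
    (hy : IsGPSet Γ (insert y E)) (hxE : x ∉ E) (hyE : y ∉ E) (hxy : Γ.Adj x y) :
    LegalMove Γ (insert x E) (insert y E) := by
  refine ⟨hx, x, Set.mem_insert x E, y, ?_, hxy, ?_, hy⟩
  · rintro (h | h)
    exacts [hxy.ne h.symm, hyE h]
  · rw [Set.insert_sdiff_self_of_notMem hxE]

lemma LegalMove.image {W : Type*} {Δ : SimpleGraph W} (φ : Γ →g Δ) (hφ : Function.Injective φ)
    (hgp : ∀ U, IsGPSet Γ U → IsGPSet Δ (φ '' U)) {S T : Set V} (h : LegalMove Γ S T) :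
    LegalMove Δ (φ '' S) (φ '' T) := by
  obtain ⟨hS, u, hu, v, hv, huv, rfl, hT⟩ := h
  refine ⟨hgp S hS, φ u, ⟨u, hu, rfl⟩, φ v, ?_, φ.map_adj huv, ?_, hgp _ hT⟩
  · rwa [hφ.mem_set_image]
  · rw [Set.image_insert_eq, Set.image_sdiff hφ, Set.image_singleton]

/-- `Tour Γ S T A`: a sequence of legal moves leads from `S` to `T`, and `A` is the set of
vertices occupied at some point along it. -/
inductive Tour (Γ : SimpleGraph V) : Set V → Set V → Set V → Prop
  | nil (S : Set V) : Tour Γ S S S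
  | cons {S T U A : Set V} : LegalMove Γ S T → Tour Γ T U A → Tour Γ S U (S ∪ A)

namespace Tour

lemma subset_visited {S T A : Set V} (h : Tour Γ S T A) : S ⊆ A := by
  cases h
  exacts [subset_rfl, Set.subset_union_left]

lemma append {S T U A B : Set V} (h : Tour Γ S T A) (h' : Tour Γ T U B) :
    Tour Γ S U (A ∪ B) := by
  induction h with
  | nil S => rwa [Set.union_eq_right.mpr h'.subset_visited]
  | cons m _ ih => rw [Set.union_assoc]; exact cons m (ih h')

lemma reverse {S T A : Set V} (h : Tour Γ S T A) : Tour Γ T S A := by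
  induction h with
  | nil S => exact nil S
  | @cons S T U A m r ih =>
    have h := ih.append (cons m.symm (nil S))
    rwa [← Set.union_assoc, Set.union_eq_left.mpr r.subset_visited, Set.union_comm] at h

lemma exists_of_reflTransGen {S T : Set V} (h : Relation.ReflTransGen (LegalMove Γ) S T) :
    ∃ A, Tour Γ S T A ∧ T ⊆ A := by
  induction h using Relation.ReflTransGen.head_induction_on with
  | refl => exact ⟨T, nil T, subset_rfl⟩
  | head m _ ih =>
    obtain ⟨A, hA, hTA⟩ := ih
    exact ⟨_, cons m hA, hTA.trans Set.subset_union_right⟩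

lemma exists_seq {S T A : Set V} (h : Tour Γ S T A) :
    ∃ (k : ℕ) (f : ℕ → Set V), f 0 = S ∧ (∀ i < k, LegalMove Γ (f i) (f (i + 1))) ∧
      (⋃ i ∈ Set.Iic k, f i) = A := by
  induction h with
  | nil S => exact ⟨0, fun _ => S, rfl, by omega, by simp⟩
  | @cons S T U A m _ ih =>
    obtain ⟨k, f, hf0, hf, hA⟩ := ih
    refine ⟨k + 1, fun i => Nat.casesOn i S f, rfl, ?_, ?_⟩
    · rintro (_ | i) hi
      exacts [show LegalMove Γ S (f 0) from hf0 ▸ m, hf i (by omega)]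
    · rw [← hA]
      ext z
      simp only [Set.mem_iUnion, Set.mem_Iic, Set.mem_union, exists_prop]
      constructor
      · rintro ⟨_ | i, hi, hz⟩
        exacts [Or.inl hz, Or.inr ⟨i, by omega, hz⟩]
      · rintro (hz | ⟨i, hi, hz⟩)
        exacts [⟨0, by omega, hz⟩, ⟨i + 1, by omega, hz⟩]

end Tour

/-- Legal moves are reversible, so all reachable configurations can be visited one after another,
returning to `S` in between. -/
theorem isMobileGPSet_iff [Finite V] {S : Set V} :
    IsMobileGPSet Γ S ↔
      IsGPSet Γ S ∧ ∀ v, ∃ T, Relation.ReflTransGen (LegalMove Γ) S T ∧ v ∈ T := by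
  constructor
  · rintro ⟨hS, k, f, rfl, hf, hcover⟩
    refine ⟨hS, fun v => ?_⟩
    obtain ⟨t, ht, hv⟩ := Set.mem_iUnion₂.mp (hcover ▸ Set.mem_univ v)
    have hseq : ∀ t ≤ k, Relation.ReflTransGen (LegalMove Γ) (f 0) (f t) := by
      intro t ht
      induction t with
      | zero => exact .refl
      | succ t ih => exact (ih (by omega)).tail (hf t (by omega))
    exact ⟨f t, hseq t ht, hv⟩
  · rintro ⟨hS, hreach⟩
    have hclosed : ∀ s : Set V, s.Finite → ∃ A, Tour Γ S S A ∧ s ⊆ A := by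
      intro s hs
      induction s, hs using Set.Finite.induction_on with
      | empty => exact ⟨S, Tour.nil S, Set.empty_subset _⟩
      | @insert v s _ _ ih =>
        obtain ⟨A, hA, hsA⟩ := ih
        obtain ⟨T, hST, hvT⟩ := hreach v
        obtain ⟨B, hB, hTB⟩ := Tour.exists_of_reflTransGen hST
        exact ⟨_, (hB.append hB.reverse).append hA,
          Set.insert_subset (Or.inl (Or.inl (hTB hvT))) (hsA.trans Set.subset_union_right)⟩
    obtain ⟨A, hA, hAuniv⟩ := hclosed Set.univ Set.finite_univ
    obtain ⟨k, f, hf0, hf, hcover⟩ := hA.exists_seq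
    exact ⟨hS, k, f, hf0, hf, hcover.trans (Set.univ_subset_iff.mp hAuniv)⟩

lemma LegalMove.reflTransGen_image {W : Type*} {Δ : SimpleGraph W} (φ : Γ →g Δ)
    (hφ : Function.Injective φ) (hgp : ∀ U, IsGPSet Γ U → IsGPSet Δ (φ '' U)) {S T : Set V}
    (h : Relation.ReflTransGen (LegalMove Γ) S T) :
    Relation.ReflTransGen (LegalMove Δ) (φ '' S) (φ '' T) :=
  h.lift (φ '' ·) fun _ _ => LegalMove.image φ hφ hgp

lemma le_mob [Finite V] {S : Set V} (hS : IsMobileGPSet Γ S) : S.ncard ≤ mob Γ :=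
  le_csSup ⟨Nat.card V, by rintro _ ⟨T, -, rfl⟩; exact Set.ncard_le_card T⟩ ⟨S, hS, rfl⟩

lemma mob_le {n : ℕ} (h : ∀ S, IsMobileGPSet Γ S → S.ncard ≤ n) : mob Γ ≤ n :=
  csSup_le' (by rintro _ ⟨S, hS, rfl⟩; exact h S hS)

end Mobility

section Join

variable {α β : Type*} {G : SimpleGraph α} {H : SimpleGraph β}

@[simp] lemma joinGraph_adj_inl_inl {a b : α} :
    (joinGraph G H).Adj (.inl a) (.inl b) ↔ G.Adj a b := by
  simpa [joinGraph, G.adj_comm b a] using SimpleGraph.Adj.ne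

@[simp] lemma joinGraph_adj_inl_inr {a : α} {b : β} : (joinGraph G H).Adj (.inl a) (.inr b) := by
  simp [joinGraph]

@[simp] lemma joinGraph_adj_inr_inl {a : α} {b : β} : (joinGraph G H).Adj (.inr b) (.inl a) := by
  simp [joinGraph]

end Join

section CoronaAdj

variable {α β : Type*} {G : SimpleGraph α} {H : SimpleGraph β}

@[simp] lemma corona_adj_inl_inl {u v : α} :
    (corona G H).Adj (.inl u) (.inl v) ↔ G.Adj u v := by
  simpa [corona, G.adj_comm v u] using SimpleGraph.Adj.ne

@[simp] lemma corona_adj_inl_inr {u i : α} {a : β} :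
    (corona G H).Adj (.inl u) (.inr (i, a)) ↔ u = i := by
  simp [corona, eq_comm]

@[simp] lemma corona_adj_inr_inl {u i : α} {a : β} :
    (corona G H).Adj (.inr (i, a)) (.inl u) ↔ u = i := by
  simp [corona, eq_comm]

@[simp] lemma corona_adj_inr_inr {i j : α} {a b : β} :
    (corona G H).Adj (.inr (i, a)) (.inr (j, b)) ↔ i = j ∧ H.Adj a b := by
  simp only [corona, SimpleGraph.fromRel_adj]
  grind [SimpleGraph.Adj.ne, SimpleGraph.Adj.symm]

end CoronaAdj

abbrev cone {β : Type*} (H : SimpleGraph β) : SimpleGraph (β ⊕ Fin 1) := joinGraph H ⊤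

section Cone

variable {β : Type*} {H : SimpleGraph β}

lemma cone_dist_apex_le_one (u : β ⊕ Fin 1) : (cone H).dist u (.inr 0) ≤ 1 := by
  rcases u with b | z
  · exact (dist_eq_one_iff_adj.mpr joinGraph_adj_inl_inr).le
  · simp [Subsingleton.elim z 0]

lemma cone_connected : (cone H).Connected := by
  refine SimpleGraph.Connected.mk fun u v => ?_
  have hapex : ∀ u : β ⊕ Fin 1, (cone H).Reachable u (.inr 0) := by
    rintro (b | z)
    · exact joinGraph_adj_inl_inr.reachable
    · rw [Subsingleton.elim z 0]
  exact (hapex u).trans (hapex v).symm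

lemma cone_dist_le_two (u v : β ⊕ Fin 1) : (cone H).dist u v ≤ 2 := by
  calc (cone H).dist u v ≤ (cone H).dist u (.inr 0) + (cone H).dist (.inr 0) v :=
        cone_connected.dist_triangle
    _ ≤ 1 + 1 :=
        Nat.add_le_add (cone_dist_apex_le_one u) (SimpleGraph.dist_comm ▸ cone_dist_apex_le_one v)

end Cone

namespace Corona

open Sum

variable {α β : Type*} {G : SimpleGraph α} {H : SimpleGraph β}

/-- The vertex `i` of `G` whose unit `{i} ∪ H^i` contains the given vertex. -/
def proj : α ⊕ α × β → α := Sum.elim id Prod.fst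

def depth : α ⊕ α × β → ℕ := Sum.elim (fun _ => 0) (fun _ => 1)

@[simp] lemma proj_inl (u : α) : proj (inl u : α ⊕ α × β) = u := rfl
@[simp] lemma proj_inr (i : α) (a : β) : proj (inr (i, a) : α ⊕ α × β) = i := rfl
@[simp] lemma depth_inl (u : α) : depth (inl u : α ⊕ α × β) = 0 := rfl
@[simp] lemma depth_inr (i : α) (a : β) : depth (inr (i, a) : α ⊕ α × β) = 1 := rfl

lemma depth_le_one (x : α ⊕ α × β) : depth x ≤ 1 := by
  rcases x with _ | _ <;> simp [depth]

variable (G H) in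
def inlHom : G →g corona G H := ⟨inl, corona_adj_inl_inl.mpr⟩

lemma dist_inl_proj (x : α ⊕ α × β) : (corona G H).dist x (inl (proj x)) = depth x := by
  rcases x with u | ⟨i, a⟩
  · simp
  · simp [dist_eq_one_iff_adj.mpr (corona_adj_inr_inl.mpr rfl)]

lemma dist_inl_le (hG : G.Connected) (u v : α) :
    (corona G H).dist (inl u) (inl v) ≤ G.dist u v := by
  obtain ⟨p, hp⟩ := hG.exists_walk_length_eq_dist u v
  exact hp ▸ p.length_map (inlHom G H) ▸ SimpleGraph.dist_le _

lemma connected (hG : G.Connected) : (corona G H).Connected := by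
  have : Nonempty α := hG.nonempty
  have hbase : ∀ x : α ⊕ α × β, (corona G H).Reachable x (inl (proj x)) := by
    rintro (u | ⟨i, a⟩)
    · rfl
    · exact (corona_adj_inr_inl.mpr rfl).reachable
  refine SimpleGraph.Connected.mk fun x y => ?_
  obtain ⟨p⟩ := hG.preconnected (proj x) (proj y)
  exact (hbase x).trans (⟨p.map (inlHom G H)⟩ : (corona G H).Reachable _ _) |>.trans (hbase y).symm

lemma dist_le (hG : G.Connected) (x y : α ⊕ α × β) :
    (corona G H).dist x y ≤ G.dist (proj x) (proj y) + depth x + depth y :=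
  calc (corona G H).dist x y
      ≤ (corona G H).dist x (inl (proj x)) + (corona G H).dist (inl (proj x)) y :=
        (connected hG).dist_triangle
    _ ≤ (corona G H).dist x (inl (proj x)) + ((corona G H).dist (inl (proj x)) (inl (proj y))
        + (corona G H).dist (inl (proj y)) y) :=
        Nat.add_le_add_left (connected hG).dist_triangle _
    _ ≤ _ := by
        have := dist_inl_le (H := H) hG (proj x) (proj y)
        rw [dist_inl_proj, SimpleGraph.dist_comm (u := inl (proj y)), dist_inl_proj]
        omega

lemma le_dist_of_proj_ne (hG : G.Connected) {x y : α ⊕ α × β} (hxy : proj x ≠ proj y) :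
    G.dist (proj x) (proj y) + depth x + depth y ≤ (corona G H).dist x y := by
  classical
  -- `f z` is the distance from `z` to the copy `H^(proj x)`; like any distance to a set, it
  -- changes by at most one along an edge
  obtain ⟨f, hf⟩ : ∃ f : α ⊕ α × β → ℕ, ∀ z, f z =
      if proj z = proj x then 1 - depth z else G.dist (proj x) (proj z) + 1 + depth z :=
    ⟨_, fun _ => rfl⟩
  have hlip : ∀ a b, (corona G H).Adj a b → f b ≤ f a + 1 := by
    have hG1 : ∀ u v, G.Adj u v → G.dist (proj x) v ≤ G.dist (proj x) u + 1 := fun u v h =>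
      (dist_eq_one_iff_adj.mpr h) ▸ hG.dist_triangle
    rintro (u | ⟨i, a⟩) (v | ⟨j, b⟩) h <;> simp only [corona_adj_inl_inl, corona_adj_inl_inr,
      corona_adj_inr_inl, corona_adj_inr_inr] at h <;> simp only [hf, proj_inl, proj_inr,
      depth_inl, depth_inr]
    · have := hG1 u v h
      by_cases hu : u = proj x <;> by_cases hv : v = proj x <;> simp_all
    · subst h; by_cases hu : u = proj x <;> simp [hu]
    · subst h; by_cases hv : v = proj x <;> simp [hv]
    · exact h.1 ▸ Nat.le_succ _
  have := ((connected hG).preconnected x y).le_add_dist hlip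
  simp only [hf, if_true, if_neg hxy.symm] at this
  have := depth_le_one x
  omega

lemma dist_of_proj_ne (hG : G.Connected) {x y : α ⊕ α × β} (hxy : proj x ≠ proj y) :
    (corona G H).dist x y = G.dist (proj x) (proj y) + depth x + depth y :=
  (dist_le hG x y).antisymm (le_dist_of_proj_ne hG hxy)

variable (G H) in
/-- The unit `{i} ∪ H^i`, with apex `i`. -/
def unit (i : α) : cone H ↪g corona G H where
  toFun := Sum.elim (fun b => inr (i, b)) (fun _ => inl i)
  inj' := by
    rintro (a | z) (b | z') h <;> simp_all [Fin.fin_one_eq_zero]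
  map_rel_iff' := by
    intro u v
    change (corona G H).Adj (Sum.elim (fun b => inr (i, b)) (fun _ => inl i) u)
      (Sum.elim (fun b => inr (i, b)) (fun _ => inl i) v) ↔ _
    rcases u with a | z <;> rcases v with b | z' <;> simp [Fin.fin_one_eq_zero]

@[simp] lemma unit_inl (i : α) (b : β) : unit G H i (inl b) = inr (i, b) := rfl
@[simp] lemma unit_inr (i : α) (z : Fin 1) : unit G H i (inr z) = inl i := rfl

lemma mem_range_unit (i : α) {z : α ⊕ α × β} (hz : proj z = i) :
    z ∈ Set.range (unit G H i) := by
  rcases z with u | ⟨j, b⟩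
  · exact ⟨inr 0, by simp_all⟩
  · exact ⟨inl b, by simp_all⟩

lemma dist_unit (i : α) (u v : β ⊕ Fin 1) :
    (corona G H).dist (unit G H i u) (unit G H i v) = (cone H).dist u v :=
  (unit G H i).dist_eq_of_dist_le_two (cone_connected.preconnected u v) (cone_dist_le_two u v)

def copy (i : α) : Set (α ⊕ α × β) := Set.range fun b => inr (i, b)

lemma mem_copy_of_proj_eq {i : α} {z : α ⊕ α × β} (hz : proj z = i) (hzi : z ≠ inl i) :
    z ∈ copy i := by
  rcases z with m | ⟨m, b⟩
  exacts [absurd (congrArg inl hz) hzi, ⟨b, hz ▸ rfl⟩]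

lemma mem_copy_or_eq_inl_of_adj {i : α} {u v : α ⊕ α × β} (hu : u ∈ copy i)
    (huv : (corona G H).Adj u v) : v ∈ copy i ∨ v = inl i := by
  obtain ⟨a, rfl⟩ := hu
  rcases v with j | ⟨j, b⟩ <;> simp at huv
  exacts [Or.inr (huv ▸ rfl), Or.inl ⟨b, huv.1 ▸ rfl⟩]

/-- Across units, corona distances are `G`-distances plus depths, so a vertex of `S` between
two others projects to a vertex between their projections. -/
lemma isGPSet_of_injOn_proj (hG : G.Connected) {S : Set (α ⊕ α × β)} (hS : Set.InjOn proj S)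
    (hF : IsGPSet G (proj '' S)) : IsGPSet (corona G H) S := by
  rw [isGPSet_iff_dist hG] at hF
  rw [isGPSet_iff_dist (connected hG)]
  intro u hu v hv w hw h
  by_cases hwu : w = u
  · exact Or.inl hwu
  by_cases hwv : w = v
  · exact Or.inr hwv
  have hwu' : proj w ≠ proj u := fun e => hwu (hS hw hu e)
  have hwv' : proj w ≠ proj v := fun e => hwv (hS hw hv e)
  rw [dist_of_proj_ne hG hwu'.symm, dist_of_proj_ne hG hwv'] at h
  by_cases huv : u = v
  · subst huv
    have := hG.pos_dist_of_ne hwu'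
    simp only [SimpleGraph.dist_self] at h
    omega
  rw [dist_of_proj_ne hG fun e => huv (hS hu hv e)] at h
  have := hG.dist_triangle (u := proj u) (v := proj w) (w := proj v)
  rcases hF _ ⟨u, hu, rfl⟩ _ ⟨v, hv, rfl⟩ _ ⟨w, hw, rfl⟩ (by omega) with e | e
  exacts [absurd e hwu', absurd e hwv']

lemma isGPSet_image_unit {T : Set (β ⊕ Fin 1)} (hG : G.Connected) (hT : IsGPSet (cone H) T)
    (i : α) : IsGPSet (corona G H) (unit G H i '' T) :=
  hT.image_of_dist_eq cone_connected (connected hG) (dist_unit i)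

lemma isGPSet_preimage_unit {S : Set (α ⊕ α × β)} (hG : G.Connected)
    (hS : IsGPSet (corona G H) S) (i : α) : IsGPSet (cone H) (unit G H i ⁻¹' S) :=
  hS.preimage_of_dist_eq cone_connected (connected hG) (unit G H i).injective (dist_unit i)

lemma ncard_le_gp_cone [Finite β] {S : Set (α ⊕ α × β)} (hG : G.Connected)
    (hS : IsGPSet (corona G H) S) {i : α} (hSi : ∀ z ∈ S, proj z = i) :
    S.ncard ≤ gp (cone H) := by
  have hrange : S ⊆ Set.range (unit G H i) := fun z hz => mem_range_unit i (hSi z hz)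
  rw [← Set.image_preimage_eq_of_subset hrange,
    Set.ncard_image_of_injective _ (unit G H i).injective]
  exact le_gp (isGPSet_preimage_unit hG hS i)

/-- A vertex outside `H^i` is equidistant from all of `H^i`, at distance at least `2`, while
`H^i` has diameter at most `2`. -/
lemma isGPSet_insert_of_subset_copy (hG : G.Connected) {i : α} {E : Set (α ⊕ α × β)}
    (hE : IsGPSet (corona G H) E) (hEi : E ⊆ copy i) {x : α ⊕ α × β} (hx : proj x ≠ i) :
    IsGPSet (corona G H) (insert x E) := by
  refine hE.insert_of_dist_eq (connected hG) (D := G.dist (proj x) i + depth x + 1)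
    (fun e he => ?_) (fun e he e' he' => ?_)
  · obtain ⟨b, rfl⟩ := hEi he
    simpa using dist_of_proj_ne hG (y := inr (i, b)) hx
  · obtain ⟨b, rfl⟩ := hEi he
    obtain ⟨b', rfl⟩ := hEi he'
    have h2 := dist_unit (G := G) i (inl b) (inl b') ▸ cone_dist_le_two (H := H) (inl b) (inl b')
    have h1 := hG.pos_dist_of_ne hx
    simp only [unit_inl] at h2 ⊢
    omega

lemma proj_eq_of_mem_of_inl_mem_of_inr_mem (hG : G.Connected) {S : Set (α ⊕ α × β)}
    (hS : IsGPSet (corona G H) S) {i : α} {a : β} (hi : inl i ∈ S) (ha : inr (i, a) ∈ S)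
    {x : α ⊕ α × β} (hx : x ∈ S) : proj x = i := by
  by_contra hxi
  rw [isGPSet_iff_dist (connected hG)] at hS
  have hia : (corona G H).dist (inl i) (inr (i, a)) = 1 :=
    dist_eq_one_iff_adj.mpr (corona_adj_inl_inr.mpr rfl)
  have h := hS x hx _ ha _ hi
  rw [dist_of_proj_ne hG hxi, dist_of_proj_ne hG (y := inr (i, a)) hxi, hia] at h
  rcases h (by simp) with e | e
  · exact hxi (e ▸ rfl)
  · simp at e

lemma isGPSet_image_inl (hG : G.Connected) {F : Set α} (hF : IsGPSet G F) :
    IsGPSet (corona G H) (inl '' F) := by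
  refine isGPSet_of_injOn_proj hG ?_ (by simpa [Set.image_image] using hF)
  rintro _ ⟨u, -, rfl⟩ _ ⟨v, -, rfl⟩ h
  rw [show u = v from h]

lemma legalMove_inl_inr (hG : G.Connected) {F : Set α} (hF : IsGPSet G F) {i : α} (hi : i ∈ F)
    (a : β) : LegalMove (corona G H) (inl '' F) (insert (inr (i, a)) (inl '' F \ {inl i})) := by
  refine ⟨isGPSet_image_inl hG hF, inl i, ⟨i, hi, rfl⟩, inr (i, a), by simp,
    corona_adj_inl_inr.mpr rfl, rfl, isGPSet_of_injOn_proj hG ?_ (hF.subset ?_)⟩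
  · rintro _ (rfl | ⟨⟨u, -, rfl⟩, hu⟩) _ (rfl | ⟨⟨v, -, rfl⟩, hv⟩) h <;>
      simp_all [eq_comm]
  · rintro _ ⟨_, rfl | ⟨⟨u, hu, rfl⟩, -⟩, rfl⟩
    exacts [hi, hu]

lemma isMobileGPSet_image_inl [Finite α] [Finite β] (hG : G.Connected) {S : Set α}
    (hS : IsMobileGPSet G S) : IsMobileGPSet (corona G H) (inl '' S) := by
  rw [isMobileGPSet_iff] at hS ⊢
  obtain ⟨hS, hreach⟩ := hS
  have hlift {T : Set α} : Relation.ReflTransGen (LegalMove G) S T →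
      Relation.ReflTransGen (LegalMove (corona G H)) (inl '' S) (inl '' T) :=
    LegalMove.reflTransGen_image (inlHom G H) inl_injective (fun _ => isGPSet_image_inl hG)
  refine ⟨isGPSet_image_inl hG hS, ?_⟩
  rintro (v | ⟨i, a⟩)
  · obtain ⟨T, hST, hv⟩ := hreach v
    exact ⟨_, hlift hST, v, hv, rfl⟩
  · obtain ⟨T, hST, hi⟩ := hreach i
    exact ⟨_, (hlift hST).tail (legalMove_inl_inr hG (hS.of_reflTransGen hST) hi a),
      Set.mem_insert _ _⟩

lemma exists_reflTransGen_mem_of_apex (hG : G.Connected) {i : α} {E : Set (α ⊕ α × β)}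
    (hEi : E ⊆ copy i) (hE : IsGPSet (corona G H) (insert (inl i) E)) {z : α ⊕ α × β}
    (hz : proj z ≠ i) :
    ∃ T, Relation.ReflTransGen (LegalMove (corona G H)) (insert (inl i) E) T ∧ z ∈ T := by
  have hgp : ∀ x, proj x ≠ i ∨ x = inl i → IsGPSet (corona G H) (insert x E) := by
    rintro x (hx | rfl)
    exacts [isGPSet_insert_of_subset_copy hG (hE.subset (Set.subset_insert _ _)) hEi hx, hE]
  have hnot : ∀ x, proj x ≠ i ∨ x = inl i → x ∉ E := by
    rintro x hx hxE
    obtain ⟨b, rfl⟩ := hEi hxE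
    simp at hx
  have hmove : ∀ x y, proj x ≠ i ∨ x = inl i → proj y ≠ i ∨ y = inl i →
      (corona G H).Adj x y → LegalMove (corona G H) (insert x E) (insert y E) :=
    fun x y hx hy hxy => legalMove_insert (hgp x hx) (hgp y hy) (hnot x hx) (hnot y hy) hxy
  have hinl : ∀ m : α, proj (inl m : α ⊕ α × β) ≠ i ∨ (inl m : α ⊕ α × β) = inl i :=
    fun m => (ne_or_eq m i).imp id (congrArg inl)
  have hwalk : ∀ {s m : α} (p : G.Walk s m),
      Relation.ReflTransGen (LegalMove (corona G H)) (insert (inl s) E) (insert (inl m) E) := by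
    intro s m p
    induction p with
    | nil => exact .refl
    | cons h _ ih => exact .head (hmove _ _ (hinl _) (hinl _) (corona_adj_inl_inl.mpr h)) ih
  obtain ⟨p⟩ := hG.preconnected i (proj z)
  rcases z with m | ⟨m, b⟩
  · exact ⟨_, hwalk p, Set.mem_insert _ _⟩
  · exact ⟨_, (hwalk p).tail (hmove _ _ (hinl m) (Or.inl hz) (corona_adj_inl_inr.mpr rfl)),
      Set.mem_insert _ _⟩

lemma isMobileGPSet_image_unit [Finite α] [Finite β] (hG : G.Connected)
    {T : Set (β ⊕ Fin 1)} (hT : IsMobileGPSet (cone H) T) (i : α) :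
    IsMobileGPSet (corona G H) (unit G H i '' T) := by
  rw [isMobileGPSet_iff] at hT ⊢
  obtain ⟨hT, hreach⟩ := hT
  have hlift {T' : Set (β ⊕ Fin 1)} : Relation.ReflTransGen (LegalMove (cone H)) T T' →
      Relation.ReflTransGen (LegalMove (corona G H)) (unit G H i '' T) (unit G H i '' T') :=
    LegalMove.reflTransGen_image (unit G H i).toHom (unit G H i).injective
      (fun _ hU => isGPSet_image_unit hG hU i)
  refine ⟨isGPSet_image_unit hG hT i, fun z => ?_⟩
  by_cases hz : proj z = i
  · obtain ⟨u, rfl⟩ := mem_range_unit (G := G) (H := H) i hz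
    obtain ⟨T', hTT', hu⟩ := hreach u
    exact ⟨_, hlift hTT', u, hu, rfl⟩
  obtain ⟨T', hTT', hapex⟩ := hreach (inr 0)
  have hT' : unit G H i '' T' = insert (inl i) (unit G H i '' T' \ {inl i}) := by
    have hi : inl i ∈ unit G H i '' T' := ⟨inr 0, hapex, rfl⟩
    rw [Set.insert_sdiff_singleton, Set.insert_eq_of_mem hi]
  have hEi : unit G H i '' T' \ {inl i} ⊆ copy i := by
    rintro _ ⟨⟨b | z, -, rfl⟩, hne⟩
    exacts [⟨b, rfl⟩, absurd rfl hne]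
  obtain ⟨U, hU, hzU⟩ := exists_reflTransGen_mem_of_apex hG hEi
    (hT' ▸ isGPSet_image_unit hG (hT.of_reflTransGen hTT') i) hz
  exact ⟨U, (hlift hTT').trans (hT' ▸ hU), hzU⟩

variable [Finite β]

lemma inl_notMem_of_mem_copy (hG : G.Connected) {S : Set (α ⊕ α × β)}
    (hS : IsGPSet (corona G H) S) (hcard : gp (cone H) < S.ncard) {i : α} {e : α ⊕ α × β}
    (he : e ∈ S) (hei : e ∈ copy i) : inl i ∉ S := by
  intro hi
  obtain ⟨a, rfl⟩ := hei
  exact hcard.not_ge (ncard_le_gp_cone hG hS fun x hx =>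
    proj_eq_of_mem_of_inl_mem_of_inr_mem hG hS hi he hx)

lemma mem_copy_of_mem_of_proj_eq (hG : G.Connected) {S : Set (α ⊕ α × β)}
    (hS : IsGPSet (corona G H) S) (hcard : gp (cone H) < S.ncard) {z w : α ⊕ α × β}
    (hz : z ∈ S) (hw : w ∈ S) (hzw : z ≠ w) (h : proj z = proj w) : z ∈ copy (proj w) := by
  refine mem_copy_of_proj_eq h fun hzi => inl_notMem_of_mem_copy hG hS hcard hw ?_ (hzi ▸ hz)
  exact mem_copy_of_proj_eq rfl (hzi ▸ hzw.symm)

lemma _root_.LegalMove.nontrivial_inter_copy [Finite α] (hG : G.Connected) {S T : Set (α ⊕ α × β)}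
    (h : LegalMove (corona G H) S T) (hcard : gp (cone H) < S.ncard) {i : α}
    (hS : (S ∩ copy i).Nontrivial) : (T ∩ copy i).Nontrivial := by
  have hcardT : gp (cone H) < T.ncard := h.ncard_eq ▸ hcard
  obtain ⟨-, u, hu, v, hv, huv, rfl, hT⟩ := h
  have stays : ∀ p ∈ S, p ≠ u → p ∈ insert v (S \ {u}) := fun p hp hpu => Or.inr ⟨hp, hpu⟩
  by_cases hui : u ∈ copy i
  · obtain ⟨q, ⟨hqS, hqi⟩, hqu⟩ := hS.exists_ne u
    rcases mem_copy_or_eq_inl_of_adj hui huv with hvi | rfl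
    · exact ⟨v, ⟨Set.mem_insert _ _, hvi⟩, q, ⟨stays q hqS hqu, hqi⟩,
        fun hvq => hv (hvq ▸ hqS)⟩
    · exact absurd (Set.mem_insert _ _) (inl_notMem_of_mem_copy hG hT hcardT
        (stays q hqS hqu) hqi)
  · obtain ⟨p, ⟨hpS, hpi⟩, q, ⟨hqS, hqi⟩, hpq⟩ := hS
    exact ⟨p, ⟨stays p hpS (ne_of_mem_of_not_mem hpi hui), hpi⟩, q,
      ⟨stays q hqS (ne_of_mem_of_not_mem hqi hui), hqi⟩, hpq⟩

lemma ncard_le_of_isMobileGPSet [Finite α] (hG : G.Connected) {S : Set (α ⊕ α × β)}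
    (hS : IsMobileGPSet (corona G H) S) : S.ncard ≤ max (Nat.card α) (gp (cone H)) := by
  rw [isMobileGPSet_iff] at hS
  obtain ⟨hS, hreach⟩ := hS
  by_contra! hlt
  have hcard : gp (cone H) < S.ncard := (le_max_right _ _).trans_lt hlt
  obtain ⟨x, hx, y, hy, hxy, hproj⟩ := Set.exists_ne_map_eq_of_ncard_lt_of_maps_to
    (t := Set.univ) (f := proj) (by simpa using (le_max_left _ _).trans_lt hlt)
    (fun _ _ => Set.mem_univ _)
  have hpair : (S ∩ copy (proj y)).Nontrivial :=
    ⟨x, ⟨hx, mem_copy_of_mem_of_proj_eq hG hS hcard hx hy hxy hproj⟩, y,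
      ⟨hy, hproj ▸ mem_copy_of_mem_of_proj_eq hG hS hcard hy hx hxy.symm hproj.symm⟩, hxy⟩
  have hinv : ∀ T, Relation.ReflTransGen (LegalMove (corona G H)) S T →
      T.ncard = S.ncard ∧ (T ∩ copy (proj y)).Nontrivial := by
    intro T h
    induction h with
    | refl => exact ⟨rfl, hpair⟩
    | tail _ m ih =>
      exact ⟨m.ncard_eq.trans ih.1, m.nontrivial_inter_copy hG (ih.1 ▸ hcard) ih.2⟩
  obtain ⟨T, hST, hiT⟩ := hreach (inl (proj y))
  obtain ⟨hTS, e, ⟨heT, hei⟩, -⟩ := hinv T hST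
  exact inl_notMem_of_mem_copy hG (hS.of_reflTransGen hST) (hTS ▸ hcard) heT hei hiT

lemma mob_le_mob_corona [Finite α] (hG : G.Connected) : mob G ≤ mob (corona G H) :=
  mob_le fun S hS => Set.ncard_image_of_injective S inl_injective ▸
    le_mob (isMobileGPSet_image_inl hG hS)

lemma mob_cone_le_mob_corona [Finite α] (hG : G.Connected) : mob (cone H) ≤ mob (corona G H) :=
  have i := hG.nonempty.some
  mob_le fun T hT => Set.ncard_image_of_injective T (unit G H i).injective ▸
    le_mob (isMobileGPSet_image_unit hG hT i)

lemma mob_corona_le [Finite α] (hG : G.Connected) :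
    mob (corona G H) ≤ max (Nat.card α) (gp (cone H)) :=
  mob_le fun _ hS => ncard_le_of_isMobileGPSet hG hS

end Corona

theorem mob_corona_bounds {α β : Type*} [Finite α] [Finite β]
    (G : SimpleGraph α) (H : SimpleGraph β) (hG : G.Connected) :
    max (mob G) (mob (joinGraph H (⊤ : SimpleGraph (Fin 1)))) ≤ mob (corona G H) ∧
    mob (corona G H) ≤ max (Nat.card α) (gp (joinGraph H (⊤ : SimpleGraph (Fin 1)))) :=
  ⟨max_le (Corona.mob_le_mob_corona hG) (Corona.mob_cone_le_mob_corona hG),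
    Corona.mob_corona_le hG⟩
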